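/- arXiv:2509.25997 — 2 statements merged into one kernel-verified Lean document; each statement's English description precedes it below -/
import Mathlib

section
/- Let d ≥ 3 be odd, let q be an odd prime power, let i ∈ {3,4}, and write Q = Q_i^d. Let s₁, s₂ be Q-spheres with centers c₁, c₂ and radii r₁, r₂ such that t := Q(c₁−c₂) ≠ 0 and D(t,r₁,r₂) = 0. Then |s₁ ∩ s₂| = q^{d−2} + (−1)^{i+1}·η(−t)·(q^{(d−1)/2} − q^{(d−3)/2}). -/
open Finset

section Defs
variable {F : Type*} [Field F] [Fintype F] [DecidableEq F]

/-- `x₁x₂ + x₃x₄ + ⋯` : the sum of the first `k` products of consecutive pairs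
of coordinates. -/
def pairsForm {d : ℕ} (k : ℕ) (x : Fin d → F) : F :=
  ∑ j ∈ Finset.range k, if h : 2*j+1 < d then x ⟨2*j, by omega⟩ * x ⟨2*j+1, h⟩ else 0

/-- `Q₁^d(x) = x₁x₂ + x₃x₄ + ⋯ + x_{d−1}x_d` (for even `d`). -/
def Q1form {d : ℕ} (x : Fin d → F) : F := pairsForm (d/2) x

/-- `Q₂^d(x) = x₁x₂ + ⋯ + x_{d−3}x_{d−2} + x_{d−1}² − a·x_d²` (for even `d`,
`a` a non-square). -/
def Q2form (a : F) {d : ℕ} (x : Fin d → F) : F :=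
  pairsForm ((d-2)/2) x +
    (if h : 2 ≤ d then x ⟨d-2, by omega⟩ ^ 2 - a * x ⟨d-1, by omega⟩ ^ 2 else 0)

/-- `Q₃^d(x) = x₁x₂ + ⋯ + x_{d−2}x_{d−1} − x_d²` (for odd `d`). -/
def Q3form {d : ℕ} (x : Fin d → F) : F :=
  pairsForm ((d-1)/2) x - (if h : 1 ≤ d then x ⟨d-1, by omega⟩ ^ 2 else 0)

/-- `Q₄^d(x) = x₁x₂ + ⋯ + x_{d−2}x_{d−1} − a·x_d²` (for odd `d`, `a` a non-square). -/
def Q4form (a : F) {d : ℕ} (x : Fin d → F) : F :=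
  pairsForm ((d-1)/2) x - (if h : 1 ≤ d then a * x ⟨d-1, by omega⟩ ^ 2 else 0)

/-- The quadratic form `Q_i^d`. -/
def Qi (a : F) (i : ℕ) {d : ℕ} (x : Fin d → F) : F :=
  if i = 1 then Q1form x else if i = 2 then Q2form a x
  else if i = 3 then Q3form x else Q4form a x

/-- `‖x‖ = x₁² + ⋯ + x_d²`. -/
def normForm {d : ℕ} (x : Fin d → F) : F := ∑ i, x i ^ 2

/-- `I(P,S)`: the number of incidences between a set `P` of points and a set `S`
of `Qf`-spheres, each sphere given as a (center, radius) pair. -/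
def sphIncid {d : ℕ} (Qf : (Fin d → F) → F)
    (P : Finset (Fin d → F)) (S : Finset ((Fin d → F) × F)) : ℕ :=
  ((P ×ˢ S).filter fun z => Qf (z.1 - z.2.1) = z.2.2).card

/-- The set of points of the `Qf`-sphere `s` (given as a (center, radius) pair). -/
def spherePts {d : ℕ} (Qf : (Fin d → F) → F) (s : (Fin d → F) × F) : Finset (Fin d → F) :=
  Finset.univ.filter fun x => Qf (x - s.1) = s.2

end Defs

open Finset
section Lemmas
variable {F : Type*} [Field F] [Fintype F] [DecidableEq F]

private lemma my_card_filter_prod {α β : Type*} [Fintype α] [Fintype β] [DecidableEq α]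
    (P : α × β → Prop) [DecidablePred P] :
    (univ.filter P).card = ∑ a : α, (univ.filter fun b => P (a, b)).card := by
  rw [Finset.card_eq_sum_card_fiberwise (f := Prod.fst) (t := univ) (fun x _ => mem_univ _)]
  refine Finset.sum_congr rfl fun a _ => ?_
  refine Finset.card_nbij Prod.snd ?_ ?_ ?_
  · intro x hx
    simp only [Finset.mem_coe, mem_filter, mem_univ, true_and] at hx ⊢
    obtain ⟨h1, h2⟩ := hx
    rwa [show (a, x.2) = x by ext <;> simp [h2.symm]]
  · intro x hx y hy hxy
    simp only [coe_filter, Set.mem_setOf_eq] at hx hy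
    ext
    · rw [hx.2, hy.2]
    · exact hxy
  · intro b hb
    simp only [coe_filter, mem_univ, true_and, Set.mem_setOf_eq] at hb ⊢
    exact ⟨(a, b), ⟨by simpa using hb, rfl⟩, rfl⟩

private lemma my_card_filter_prod2 {α β : Type*} [Fintype α] [Fintype β] [DecidableEq β]
    (P : α × β → Prop) [DecidablePred P] :
    (univ.filter P).card = ∑ b : β, (univ.filter fun a => P (a, b)).card := by
  rw [Finset.card_eq_sum_card_fiberwise (f := Prod.snd) (t := univ) (fun x _ => mem_univ _)]
  refine Finset.sum_congr rfl fun b _ => ?_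
  refine Finset.card_nbij Prod.fst ?_ ?_ ?_
  · intro x hx
    simp only [Finset.mem_coe, mem_filter, mem_univ, true_and] at hx ⊢
    obtain ⟨h1, h2⟩ := hx
    rwa [show (x.1, b) = x by ext <;> simp [h2.symm]]
  · intro x hx y hy hxy
    simp only [coe_filter, Set.mem_setOf_eq] at hx hy
    ext
    · exact hxy
    · rw [hx.2, hy.2]
  · intro a ha
    simp only [coe_filter, mem_univ, true_and, Set.mem_setOf_eq] at ha ⊢
    exact ⟨(a, b), ⟨by simpa using ha, rfl⟩, rfl⟩

private lemma my_card_filter_equiv {X Y : Type*} [Fintype X] [Fintype Y] [DecidableEq Y]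
    (e : X ≃ Y) (P : Y → Prop) [DecidablePred P] :
    (univ.filter fun x => P (e x)).card = (univ.filter P).card := by
  refine Finset.card_nbij e ?_ (e.injective.injOn) ?_
  · intro x hx; simp only [Finset.mem_coe, mem_filter, mem_univ, true_and] at hx ⊢; exact hx
  · intro y hy
    simp only [coe_filter, mem_univ, true_and, Set.mem_setOf_eq] at hy ⊢
    exact ⟨e.symm y, by simpa using hy, by simp⟩

private lemma my_card_mulpair (s : F) :
    ((univ.filter fun p : F × F => p.1 * p.2 = s).card : ℤ)
      = (Fintype.card F - 1) + if s = 0 then (Fintype.card F : ℤ) else 0 := by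
  rw [my_card_filter_prod]
  have h : ∀ u : F, ((univ.filter fun v : F => u * v = s).card : ℤ)
      = if u = 0 then (if s = 0 then (Fintype.card F : ℤ) else 0) else 1 := by
    intro u
    split_ifs with hu hs
    · subst hu hs
      simp [Finset.filter_true_of_mem]
    · subst hu
      rw [Finset.card_eq_zero.2]
      · simp
      · ext v; simp [eq_comm, hs]
    · rw [show (univ.filter fun v : F => u * v = s) = {u⁻¹ * s} by
        ext v; simp [eq_comm, eq_inv_mul_iff_mul_eq₀ hu]]
      simp
  push_cast
  rw [Finset.sum_congr rfl (fun u _ => h u)]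
  have h2 : ∀ u : F, (if u = 0 then (if s = 0 then (Fintype.card F : ℤ) else 0) else 1)
      = (if u = 0 then (if s = 0 then (Fintype.card F : ℤ) else 0) - 1 else 0) + 1 := by
    intro u; split_ifs <;> ring
  rw [Finset.sum_congr rfl (fun u _ => h2 u), Finset.sum_add_distrib,
    Finset.sum_ite_eq' univ (0 : F), if_pos (mem_univ _), Finset.sum_const,
    Finset.card_univ]
  ring

/-- split off the first two coordinates -/
private def myEquiv (F : Type*) (n : ℕ) : (Fin (n+2) → F) ≃ (F × F) × (Fin n → F) where
  toFun x := ((x ⟨0, by omega⟩, x ⟨1, by omega⟩), fun j => x ⟨(j : ℕ) + 2, by omega⟩)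
  invFun z := fun j => if h0 : (j : ℕ) = 0 then z.1.1 else if h1 : (j : ℕ) = 1 then z.1.2
    else z.2 ⟨(j : ℕ) - 2, by omega⟩
  left_inv x := by
    funext j
    rcases j with ⟨jv, hj⟩
    dsimp only
    split_ifs with h0 h1
    · congr 1; exact Fin.ext h0.symm
    · congr 1; exact Fin.ext h1.symm
    · congr 1; exact Fin.ext (by simp; omega)
  right_inv z := by
    rcases z with ⟨⟨u, v⟩, y⟩
    refine Prod.ext (Prod.ext ?_ ?_) ?_ <;> dsimp only
    · rw [dif_pos rfl]
    · rw [dif_neg (by norm_num), dif_pos rfl]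
    · funext j
      rw [dif_neg (by omega), dif_neg (by omega)]
      exact congrArg y (Fin.ext (by simp))

private lemma myEquiv_apply {F : Type*} (n : ℕ) (x : Fin (n+2) → F) :
    myEquiv F n x = ((x ⟨0, by omega⟩, x ⟨1, by omega⟩),
      fun j : Fin n => x ⟨(j : ℕ) + 2, by omega⟩) := rfl

omit [Fintype F] [DecidableEq F] in
private lemma pairsForm_split {n k : ℕ} (hk : 2*k+1 ≤ n) (x : Fin (n+2) → F) :
    pairsForm (k+1) x
      = x ⟨0, by omega⟩ * x ⟨1, by omega⟩
        + pairsForm k (fun j : Fin n => x ⟨(j : ℕ) + 2, by omega⟩) := by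
  unfold pairsForm
  rw [Finset.sum_range_succ']
  rw [dif_pos (by omega : 2*0+1 < n+2)]
  rw [add_comm]
  congr 1
  refine Finset.sum_congr rfl fun j hj => ?_
  rw [mem_range] at hj
  rw [dif_pos (by omega : 2*(j+1)+1 < n+2), dif_pos (by omega : 2*j+1 < n)]
  congr 1 <;> exact congrArg x (Fin.ext (by simp; omega))

omit [Fintype F] [DecidableEq F] in
private lemma Q3form_split {n : ℕ} (hn : Odd n) (x : Fin (n+2) → F) :
    Q3form x = x ⟨0, by omega⟩ * x ⟨1, by omega⟩
        + Q3form (fun j : Fin n => x ⟨(j : ℕ) + 2, by omega⟩) := by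
  have hn1 : 1 ≤ n := hn.pos
  unfold Q3form
  rw [show (n + 2 - 1)/2 = (n-1)/2 + 1 by omega, pairsForm_split (by omega) x,
    dif_pos (by omega : 1 ≤ n + 2), dif_pos hn1]
  have hx : (fun j : Fin n => x ⟨(j : ℕ) + 2, by omega⟩) (⟨n - 1, by omega⟩ : Fin n)
      = x ⟨n + 2 - 1, by omega⟩ := congrArg x (Fin.ext (by simp; omega))
  rw [hx]
  ring

omit [Fintype F] [DecidableEq F] in
private lemma Q4form_split {a : F} {n : ℕ} (hn : Odd n) (x : Fin (n+2) → F) :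
    Q4form a x = x ⟨0, by omega⟩ * x ⟨1, by omega⟩
        + Q4form a (fun j : Fin n => x ⟨(j : ℕ) + 2, by omega⟩) := by
  have hn1 : 1 ≤ n := hn.pos
  unfold Q4form
  rw [show (n + 2 - 1)/2 = (n-1)/2 + 1 by omega, pairsForm_split (by omega) x,
    dif_pos (by omega : 1 ≤ n + 2), dif_pos hn1]
  have hx : (fun j : Fin n => x ⟨(j : ℕ) + 2, by omega⟩) (⟨n - 1, by omega⟩ : Fin n)
      = x ⟨n + 2 - 1, by omega⟩ := congrArg x (Fin.ext (by simp; omega))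
  rw [hx]
  ring

omit [Fintype F] [DecidableEq F] in
private lemma Qi_split {a : F} {i : ℕ} (hi : i = 3 ∨ i = 4) {n : ℕ} (hn : Odd n)
    (x : Fin (n+2) → F) :
    Qi a i x = x ⟨0, by omega⟩ * x ⟨1, by omega⟩
        + Qi a i (fun j : Fin n => x ⟨(j : ℕ) + 2, by omega⟩) := by
  rcases hi with hi | hi <;> subst hi
  · exact Q3form_split hn x
  · exact Q4form_split hn x

omit [Fintype F] [DecidableEq F] in
private lemma pairsForm_expand {d k : ℕ} (u v : Fin d → F) (α : F) :
    pairsForm k (u + α • v)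
      = pairsForm k u + α * (pairsForm k (u+v) - pairsForm k u - pairsForm k v)
        + α^2 * pairsForm k v := by
  unfold pairsForm
  rw [← Finset.sum_sub_distrib, ← Finset.sum_sub_distrib, Finset.mul_sum, Finset.mul_sum,
    ← Finset.sum_add_distrib, ← Finset.sum_add_distrib]
  refine Finset.sum_congr rfl fun j hj => ?_
  split_ifs with h
  · simp only [Pi.add_apply, Pi.smul_apply, smul_eq_mul]; ring
  · ring

omit [Fintype F] [DecidableEq F] in
private lemma Qi_expand {a : F} {i : ℕ} (hi : i = 3 ∨ i = 4) {d : ℕ}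
    (u v : Fin d → F) (α : F) :
    Qi a i (u + α • v)
      = Qi a i u + α * (Qi a i (u+v) - Qi a i u - Qi a i v) + α^2 * Qi a i v := by
  rcases hi with hi | hi <;> subst hi
  · have hQ : ∀ x : Fin d → F, Qi a 3 x = Q3form x := fun _ => rfl
    simp only [hQ]
    unfold Q3form
    rw [pairsForm_expand]
    split_ifs with h
    · simp only [Pi.add_apply, Pi.smul_apply, smul_eq_mul]; ring
    · ring
  · have hQ : ∀ x : Fin d → F, Qi a 4 x = Q4form a x := fun _ => rfl
    simp only [hQ]
    unfold Q4form
    rw [pairsForm_expand]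
    split_ifs with h
    · simp only [Pi.add_apply, Pi.smul_apply, smul_eq_mul]; ring
    · ring

private lemma quadChar_inv (x : F) : (quadraticChar F x⁻¹ : ℤ) = quadraticChar F x := by
  rcases eq_or_ne x 0 with h | h
  · simp [h]
  · have h1 : (quadraticChar F x) * (quadraticChar F x⁻¹) = 1 := by
      rw [← map_mul, mul_inv_cancel₀ h, map_one]
    rcases quadraticChar_dichotomy h with h2 | h2 <;> rw [h2] at h1 ⊢ <;> omega

private lemma auxCount (hF : ringChar F ≠ 2) {a : F} (ha : ¬ IsSquare a) {i : ℕ}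
    (hi : i = 3 ∨ i = 4) :
    ∀ (m : ℕ) (r : F), ((univ.filter fun x : Fin (2*m+1) → F => Qi a i x = r).card : ℤ)
      = (Fintype.card F : ℤ)^(2*m)
        + (-1:ℤ)^(i+1) * (quadraticChar F (-r)) * (Fintype.card F : ℤ)^m := by
  have ha0 : a ≠ 0 := fun h => ha (h ▸ IsSquare.zero)
  have hchia : (quadraticChar F a : ℤ) = -1 := by
    exact_mod_cast quadraticChar_neg_one_iff_not_isSquare.2 ha
  intro m
  induction m with
  | zero =>
    intro r
    set b : F := if i = 3 then 1 else a with hbdef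
    have hb0 : b ≠ 0 := by rcases hi with h | h <;> subst h <;> simp [hbdef, ha0]
    have hQ : ∀ x : Fin 1 → F, Qi a i x = -(b * x ⟨0, by omega⟩ ^ 2) := by
      intro x
      rcases hi with h | h <;> subst h <;>
        simp [Qi, Q3form, Q4form, pairsForm, hbdef]
    have step1 : (univ.filter fun x : Fin (2*0+1) → F => Qi a i x = r).card
        = (univ.filter fun y : F => -(b * y ^ 2) = r).card := by
      refine Finset.card_nbij (fun x => x ⟨0, by omega⟩) ?_ ?_ ?_
      · intro x hx
        simp only [Finset.mem_coe, mem_filter, mem_univ, true_and, hQ] at hx ⊢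
        exact hx
      · intro x hx y hy hxy
        funext j
        have h' := j.isLt
        have hj : j = ⟨0, by omega⟩ := Fin.ext (by omega)
        rw [hj]; exact hxy
      · intro y hy
        simp only [coe_filter, mem_univ, true_and, Set.mem_setOf_eq] at hy ⊢
        exact ⟨fun _ => y, by show Qi a i _ = r; rw [hQ]; exact hy, rfl⟩
    have step2 : (univ.filter fun y : F => -(b * y ^ 2) = r)
        = (univ.filter fun y : F => y ^ 2 = -r * b⁻¹) := by
      refine Finset.filter_congr fun y _ => ?_
      constructor
      · intro h; field_simp; linear_combination -h
      · intro h; field_simp at h; linear_combination -h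
    have step3 : ((univ.filter fun y : F => y ^ 2 = -r * b⁻¹).card : ℤ)
        = quadraticChar F (-r * b⁻¹) + 1 := by
      have h := quadraticChar_card_sqrts hF (-r * b⁻¹)
      rw [← h]
      congr 1
      rw [Set.toFinset_setOf]
    rw [step1, step2, step3]
    have hchib : (quadraticChar F (-r * b⁻¹) : ℤ)
        = (-1:ℤ)^(i+1) * quadraticChar F (-r) := by
      rw [map_mul]
      push_cast
      rw [quadChar_inv]
      rcases hi with h | h <;> subst h <;> simp [hbdef, hchia] <;> ring
    rw [hchib]
    ring
  | succ m ih =>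
    intro r
    have hodd : Odd (2*m+1) := ⟨m, by omega⟩
    have key := my_card_filter_equiv (myEquiv F (2*m+1))
      (fun z : (F × F) × (Fin (2*m+1) → F) => z.1.1 * z.1.2 + Qi a i z.2 = r)
    have hsame : (univ.filter fun x : Fin (2*m+1+2) → F =>
        (myEquiv F (2*m+1) x).1.1 * (myEquiv F (2*m+1) x).1.2
          + Qi a i (myEquiv F (2*m+1) x).2 = r)
        = (univ.filter fun x : Fin (2*m+1+2) → F => Qi a i x = r) := by
      refine Finset.filter_congr fun x _ => ?_
      rw [myEquiv_apply, Qi_split hi hodd x]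
    rw [hsame] at key
    have main : ((univ.filter fun x : Fin (2*(m+1)+1) → F => Qi a i x = r).card : ℤ)
        = ∑ y : Fin (2*m+1) → F,
            ((univ.filter fun p : F × F => p.1 * p.2 + Qi a i y = r).card : ℤ) := by
      show ((univ.filter fun x : Fin (2*m+1+2) → F => Qi a i x = r).card : ℤ) = _
      rw [key,
        my_card_filter_prod2
          (fun z : (F × F) × (Fin (2*m+1) → F) => z.1.1 * z.1.2 + Qi a i z.2 = r)]
      push_cast
      rfl
    rw [main]
    have inner : ∀ y : Fin (2*m+1) → F,
        ((univ.filter fun p : F × F => p.1 * p.2 + Qi a i y = r).card : ℤ)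
        = ((Fintype.card F : ℤ) - 1) + if Qi a i y = r then (Fintype.card F : ℤ) else 0 := by
      intro y
      have h : (univ.filter fun p : F × F => p.1 * p.2 + Qi a i y = r)
          = (univ.filter fun p : F × F => p.1 * p.2 = r - Qi a i y) := by
        refine Finset.filter_congr fun p _ => ?_
        constructor
        · intro h; linear_combination h
        · intro h; linear_combination h
      rw [h, my_card_mulpair]
      congr 1
      rcases eq_or_ne (Qi a i y) r with h | h
      · rw [if_pos (by rw [h, sub_self]), if_pos h]
      · rw [if_neg (fun hc => h (by linear_combination -hc)), if_neg h]
    rw [Finset.sum_congr rfl fun y _ => inner y, Finset.sum_add_distrib, Finset.sum_const,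
      ← Finset.sum_filter, Finset.sum_const, nsmul_eq_mul, nsmul_eq_mul,
      Finset.card_univ, Fintype.card_fun, Fintype.card_fin, ih r]
    push_cast
    ring

private lemma sum_quadChar (hF : ringChar F ≠ 2) : ∑ r : F, (quadraticChar F r : ℤ) = 0 := by
  exact_mod_cast congrArg (Int.cast : ℤ → ℤ) (quadraticChar_sum_zero hF)

private lemma sum_quadChar_affine (hF : ringChar F ≠ 2) {μ : F} (hμ : μ ≠ 0) (ν : F) :
    ∑ r : F, (quadraticChar F (ν + μ * r) : ℤ) = 0 := by
  have h := Equiv.sum_comp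
    (⟨fun r : F => ν + μ * r, fun s => μ⁻¹ * (s - ν),
      fun r => by field_simp; ring, fun s => by field_simp; ring⟩ : F ≃ F)
    (fun x : F => (quadraticChar F x : ℤ))
  simp only [Equiv.coe_fn_mk] at h
  rw [h, sum_quadChar hF]

private lemma sum_quadChar_sq :
    ∑ r : F, (quadraticChar F r : ℤ) * (quadraticChar F r) = (Fintype.card F : ℤ) - 1 := by
  have h : ∀ r : F, (quadraticChar F r : ℤ) * (quadraticChar F r)
      = 1 - (if r = 0 then 1 else 0) := by
    intro r
    split_ifs with hr
    · simp [hr]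
    · have h' := quadraticChar_sq_one hr
      rw [← sq]
      rw [h']
      ring
  rw [Finset.sum_congr rfl fun r _ => h r, Finset.sum_sub_distrib, Finset.sum_const,
    Finset.sum_ite_eq' univ (0 : F) (fun _ => (1:ℤ)), if_pos (mem_univ _), Finset.card_univ]
  push_cast
  ring

private lemma sum_quadChar_mul (hF : ringChar F ≠ 2) (c : F) :
    ∑ u : F, (quadraticChar F u : ℤ) * quadraticChar F (u + c)
      = if c = 0 then (Fintype.card F : ℤ) - 1 else -1 := by
  split_ifs with hc
  · subst hc; simpa using sum_quadChar_sq (F := F)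
  · have h0 : ((quadraticChar F (0:F)) : ℤ) * quadraticChar F (0 + c) = 0 := by simp
    rw [← Finset.sum_erase (f := fun u : F => (quadraticChar F u : ℤ) * quadraticChar F (u + c))
      univ h0]
    have hterm : ∀ u ∈ univ.erase (0:F),
        (quadraticChar F u : ℤ) * quadraticChar F (u + c)
          = quadraticChar F (1 + c * u⁻¹) := by
      intro u hu
      have hu0 : u ≠ 0 := (Finset.mem_erase.1 hu).1
      have h' : u + c = u * (1 + c * u⁻¹) := by field_simp
      rw [h', map_mul, ← mul_assoc]
      push_cast
      rw [show (quadraticChar F u : ℤ) * (quadraticChar F u) = 1 by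
        rw [← sq]; exact_mod_cast quadraticChar_sq_one hu0]
      ring
    rw [Finset.sum_congr rfl hterm]
    have hbij : ∑ u ∈ univ.erase (0:F), (quadraticChar F (1 + c * u⁻¹) : ℤ)
        = ∑ v ∈ univ.erase (1:F), (quadraticChar F v : ℤ) := by
      refine Finset.sum_nbij' (fun u => 1 + c * u⁻¹) (fun v => c * (v - 1)⁻¹) ?_ ?_ ?_ ?_ ?_
      · intro u hu
        have hu0 : u ≠ 0 := (Finset.mem_erase.1 hu).1
        refine Finset.mem_erase.2 ⟨?_, mem_univ _⟩
        intro h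
        have h' : c * u⁻¹ = 0 := by linear_combination h
        exact hc (by field_simp at h'; simpa using h')
      · intro v hv
        have hv1 : v ≠ 1 := (Finset.mem_erase.1 hv).1
        refine Finset.mem_erase.2 ⟨?_, mem_univ _⟩
        intro h
        rcases mul_eq_zero.1 h with h' | h'
        · exact hc h'
        · exact hv1 (sub_eq_zero.1 (inv_eq_zero.1 h'))
      · intro u hu
        have hu0 : u ≠ 0 := (Finset.mem_erase.1 hu).1
        field_simp
        simp [hc]
      · intro v hv
        have hv1 : v ≠ 1 := (Finset.mem_erase.1 hv).1
        have h' : v - 1 ≠ 0 := sub_ne_zero.2 hv1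
        field_simp
        ring
      · intro u hu; rfl
    rw [hbij, Finset.sum_erase_eq_sub (mem_univ (1:F)), sum_quadChar hF]
    simp

private lemma sum_sq_fiber (hF : ringChar F ≠ 2) (f : F → ℤ) :
    ∑ l : F, f (l^2) = ∑ u : F, (1 + (quadraticChar F u : ℤ)) * f u := by
  rw [← Finset.sum_fiberwise_of_maps_to (g := fun l : F => l^2)
    (fun x _ => mem_univ ((fun l : F => l^2) x)) (fun l => f (l^2))]
  refine Finset.sum_congr rfl fun u _ => ?_
  have h1 : ∀ l ∈ univ.filter (fun l : F => l^2 = u), f (l^2) = f u := by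
    intro l hl
    rw [(Finset.mem_filter.1 hl).2]
  rw [Finset.sum_congr rfl h1, Finset.sum_const, nsmul_eq_mul]
  congr 1
  have h := quadraticChar_card_sqrts hF u
  rw [Set.toFinset_setOf] at h
  rw [h]
  ring

section Main
variable {a : F} {i : ℕ} (hi : i = 3 ∨ i = 4) {d : ℕ} {c : Fin d → F} {t : F}
  (htc : Qi a i c = t) (ht : t ≠ 0) (h2 : (2:F) ≠ 0)

omit [Fintype F] [DecidableEq F] in
include hi htc in
private lemma E1 : ∀ (z : Fin d → F) (α : F), Qi a i (z + α • c)
    = Qi a i z + α * (Qi a i (z + c) - Qi a i z - t) + α^2 * t := by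
  intro z α
  have h := Qi_expand (a := a) hi z c α
  rw [htc] at h
  linear_combination h

omit [Fintype F] [DecidableEq F] in
include hi htc in
private lemma E2 : ∀ (z : Fin d → F) (α : F),
    Qi a i (z + α • c + c) - Qi a i (z + α • c) - t
      = (Qi a i (z + c) - Qi a i z - t) + 2 * α * t := by
  intro z α
  have h1 : z + α • c + c = z + (α + 1) • c := by
    rw [add_smul, one_smul, add_assoc]
  rw [h1, E1 hi htc z (α+1), E1 hi htc z α]
  ring

omit [Fintype F] [DecidableEq F] hi htc in
private lemma Esub : ∀ (z : Fin d → F) (α : F), z - α • c = z + (-α) • c := by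
  intro z α; rw [neg_smul, ← sub_eq_add_neg]

include hi htc ht h2 in
private lemma fib_count (r : F) :
    (univ.filter fun z : Fin d → F => Qi a i z = r).card
      = ∑ l : F, (univ.filter fun z : Fin d → F =>
          (Qi a i (z + c) - Qi a i z - t = 0 ∧ Qi a i z = r - l^2 * t)).card := by
  have h2t : 2 * t ≠ 0 := mul_ne_zero h2 ht
  have step1 : (univ.filter fun z : Fin d → F => Qi a i z = r).card
      = (univ.filter fun w : F × (Fin d → F) =>
          (Qi a i (w.2 + c) - Qi a i w.2 - t = 0 ∧ Qi a i w.2 = r - w.1^2 * t)).card := by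
    refine Finset.card_nbij'
      (fun z => ((Qi a i (z + c) - Qi a i z - t) / (2*t),
        z - ((Qi a i (z + c) - Qi a i z - t) / (2*t)) • c))
      (fun w => w.2 + w.1 • c) ?_ ?_ ?_ ?_
    · intro z hz
      rw [Finset.mem_coe, mem_filter] at hz ⊢
      obtain ⟨-, hz⟩ := hz
      refine ⟨mem_univ _, ?_, ?_⟩
      · dsimp only
        rw [Esub, E2 hi htc]
        field_simp
        ring
      · dsimp only
        rw [Esub, E1 hi htc]
        rw [hz]
        field_simp
        ring
    · intro w hw
      rw [Finset.mem_coe, mem_filter] at hw ⊢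
      obtain ⟨-, hw1, hw2⟩ := hw
      refine ⟨mem_univ _, ?_⟩
      rw [E1 hi htc, hw1, hw2]
      ring
    · intro z hz
      dsimp only
      rw [Esub, add_assoc, ← add_smul, neg_add_cancel, zero_smul, add_zero]
    · intro w hw
      rw [Finset.mem_coe, mem_filter] at hw
      obtain ⟨-, hw1, hw2⟩ := hw
      have hB : Qi a i (w.2 + w.1 • c + c) - Qi a i (w.2 + w.1 • c) - t = 2 * w.1 * t := by
        rw [E2 hi htc, hw1]; ring
      have hl : (Qi a i (w.2 + w.1 • c + c) - Qi a i (w.2 + w.1 • c) - t) / (2*t) = w.1 := by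
        rw [hB]; field_simp
      dsimp only
      rw [hl]
      have h' : w.2 + w.1 • c - w.1 • c = w.2 := add_sub_cancel_right _ _
      rw [h']
  rw [step1, my_card_filter_prod (fun w : F × (Fin d → F) =>
      (Qi a i (w.2 + c) - Qi a i w.2 - t = 0 ∧ Qi a i w.2 = r - w.1^2 * t))]

include hi htc ht h2 in
private lemma inter_count (c₁ c₂ : Fin d → F) (r₁ r₂ : F) (hc : c = c₁ - c₂)
    (hD : t^2 + r₁^2 + r₂^2 - 2*(t*r₁ + t*r₂ + r₁*r₂) = 0) :
    (spherePts (Qi a i) (c₁, r₁) ∩ spherePts (Qi a i) (c₂, r₂)).card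
      = (univ.filter fun z : Fin d → F =>
          (Qi a i (z + c) - Qi a i z - t = 0 ∧ Qi a i z = 0)).card := by
  have h2t : 2 * t ≠ 0 := mul_ne_zero h2 ht
  have hs : (t + r₂ - r₁)^2 = 4*t*r₂ := by linear_combination hD
  set lam : F := (t + r₂ - r₁) / (2*t) with hlam
  have hlam2 : lam * (2*t) = t + r₂ - r₁ := by rw [hlam]; field_simp
  have hr2 : lam^2 * t = r₂ := by
    have h4 : t * 4 ≠ 0 := by
      intro h
      rcases mul_eq_zero.1 h with h' | h'
      · exact ht h'
      · have h'' : (2:F) * 2 = 0 := by linear_combination h'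
        rcases mul_eq_zero.1 h'' with h3 | h3 <;> exact h2 h3
    apply mul_left_cancel₀ h4
    linear_combination (lam*(2*t) + (t + r₂ - r₁)) * hlam2 + hs
  refine Finset.card_nbij' (fun x => x - c₂ - lam • c) (fun z => z + lam • c + c₂) ?_ ?_ ?_ ?_
  · intro x hx
    rw [Finset.mem_coe, Finset.mem_inter] at hx
    obtain ⟨hx1, hx2⟩ := hx
    rw [spherePts, mem_filter] at hx1 hx2
    dsimp only at hx1 hx2
    obtain ⟨-, hx1⟩ := hx1
    obtain ⟨-, hx2⟩ := hx2
    have hyc : x - c₁ = (x - c₂) - c := by rw [hc]; abel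
    rw [hyc] at hx1
    have hBy : Qi a i ((x - c₂) + c) - Qi a i (x - c₂) - t = t + r₂ - r₁ := by
      have h := E1 hi htc (x - c₂) (-1)
      have e0 : (x - c₂) + (-1 : F) • c = (x - c₂) - c := by
        rw [← Esub (x - c₂) 1, one_smul]
      rw [e0] at h
      linear_combination h - hx1 + hx2
    rw [Finset.mem_coe, mem_filter]
    refine ⟨mem_univ _, ?_, ?_⟩
    · dsimp only
      rw [Esub, E2 hi htc, hBy]
      linear_combination -hlam2
    · dsimp only
      rw [Esub, E1 hi htc, hBy, hx2]
      linear_combination lam * hlam2 - hr2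
  · intro z hz
    rw [Finset.mem_coe, mem_filter] at hz
    obtain ⟨-, hz1, hz2⟩ := hz
    have hx2' : z + lam • c + c₂ - c₂ = z + lam • c := add_sub_cancel_right _ _
    have hQy : Qi a i (z + lam • c) = lam^2 * t := by
      rw [E1 hi htc, hz1, hz2]; ring
    have hBy : Qi a i ((z + lam • c) + c) - Qi a i (z + lam • c) - t = 2 * lam * t := by
      rw [E2 hi htc, hz1]; ring
    rw [Finset.mem_coe, Finset.mem_inter, spherePts, spherePts, mem_filter, mem_filter]
    refine ⟨⟨mem_univ _, ?_⟩, ⟨mem_univ _, ?_⟩⟩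
    · dsimp only
      have hyc : z + lam • c + c₂ - c₁ = (z + lam • c) - c := by rw [hc]; abel
      rw [hyc]
      have e0 : (z + lam • c) - c = (z + lam • c) + (-1 : F) • c := by
        rw [← Esub (z + lam • c) 1, one_smul]
      rw [e0, E1 hi htc]
      have hB2 : Qi a i (z + lam • c + c) - Qi a i (z + lam • c) - t = 2 * lam * t := hBy
      rw [hB2, hQy]
      linear_combination hr2 - hlam2
    · dsimp only
      rw [hx2', hQy]
      linear_combination hr2
  · intro x hx
    dsimp only
    abel
  · intro z hz
    dsimp only
    abel

end Main
end Lemmas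

/-- Intersection size of two `Q_i^d`-spheres (`i ∈ {3,4}`, odd `d`) whose
centers are at non-zero distance `t` with `D(t,r₁,r₂) = 0`. -/
theorem stmt18 {F : Type*} [Field F] [Fintype F] [DecidableEq F]
    (hq : Odd (Fintype.card F)) {d : ℕ} (hd : 3 ≤ d) (hdodd : Odd d)
    (i : ℕ) (hi : i = 3 ∨ i = 4) (a : F) (ha : ¬ IsSquare a)
    (c₁ c₂ : Fin d → F) (r₁ r₂ : F) (t : F)
    (htdef : t = Qi a i (c₁ - c₂)) (ht : t ≠ 0)
    (hD : t^2 + r₁^2 + r₂^2 - 2*(t*r₁ + t*r₂ + r₁*r₂) = 0) :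
    ((spherePts (Qi a i) (c₁, r₁) ∩ spherePts (Qi a i) (c₂, r₂)).card : ℤ)
      = (Fintype.card F : ℤ) ^ (d-2)
        + (-1) ^ (i+1) * quadraticChar F (-t)
            * ((Fintype.card F : ℤ) ^ ((d-1)/2) - (Fintype.card F : ℤ) ^ ((d-3)/2)) := by
  have hF : ringChar F ≠ 2 := by
    intro h
    have h' := FiniteField.even_card_iff_char_two.1 h
    rw [Nat.odd_iff] at hq
    omega
  have h2 : (2:F) ≠ 0 := Ring.two_ne_zero hF
  have htneg : (-t) ≠ 0 := neg_ne_zero.2 ht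
  obtain ⟨k, hk⟩ : ∃ k, d = 2*k+3 := by
    rcases hdodd with ⟨j, hj⟩
    exact ⟨j - 1, by omega⟩
  subst hk
  rw [show 2*k+3-2 = 2*k+1 by omega, show (2*k+3-1)/2 = k+1 by omega,
    show (2*k+3-3)/2 = k by omega]
  set q : ℤ := (Fintype.card F : ℤ) with hqdef
  have hq0 : q ≠ 0 := by
    rw [hqdef]
    exact_mod_cast Fintype.card_ne_zero
  set c : Fin (2*k+3) → F := c₁ - c₂ with hcdef
  have htc : Qi a i c = t := htdef.symm
  set χt : ℤ := (quadraticChar F (-t) : ℤ) with hχt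
  have hχt2 : χt * χt = 1 := by
    rw [hχt, ← sq]; exact_mod_cast quadraticChar_sq_one htneg
  set ε : ℤ := (-1:ℤ)^(i+1) with hε
  set Nz : F → ℤ :=
    fun r => ((univ.filter fun z : Fin (2*k+3) → F => Qi a i z = r).card : ℤ) with hNzdef
  set Gz : F → ℤ := fun s => ((univ.filter fun z : Fin (2*k+3) → F =>
      (Qi a i (z + c) - Qi a i z - t = 0 ∧ Qi a i z = s)).card : ℤ) with hGzdef
  have hN : ∀ r : F, Nz r = q^(2*k+2) + ε * (quadraticChar F (-r)) * q^(k+1) := by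
    intro r
    exact auxCount hF ha hi (k+1) r
  have hfib : ∀ r : F, Nz r = ∑ l : F, Gz (r - l^2 * t) := by
    intro r
    show ((univ.filter fun z : Fin (2*k+3) → F => Qi a i z = r).card : ℤ) = _
    rw [fib_count hi htc ht h2 r]
    push_cast
    rfl
  have hnegchi : ∑ r : F, (quadraticChar F (-r) : ℤ) = 0 := by
    calc ∑ r : F, (quadraticChar F (-r) : ℤ)
        = ∑ r : F, ((fun x : F => (quadraticChar F x : ℤ)) (Equiv.neg F r)) := by
          refine Finset.sum_congr rfl fun r _ => by simp
      _ = ∑ r : F, (quadraticChar F r : ℤ) :=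
          Equiv.sum_comp (Equiv.neg F) (fun x : F => (quadraticChar F x : ℤ))
      _ = 0 := sum_quadChar hF
  have hnegsq : ∑ r : F, (quadraticChar F (-r) : ℤ) * (quadraticChar F (-r)) = q - 1 := by
    calc ∑ r : F, (quadraticChar F (-r) : ℤ) * (quadraticChar F (-r))
        = ∑ r : F, ((fun x : F => (quadraticChar F x : ℤ) * (quadraticChar F x))
            (Equiv.neg F r)) := by
          refine Finset.sum_congr rfl fun r _ => by simp
      _ = ∑ r : F, (quadraticChar F r : ℤ) * (quadraticChar F r) :=
          Equiv.sum_comp (Equiv.neg F)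
            (fun x : F => (quadraticChar F x : ℤ) * (quadraticChar F x))
      _ = q - 1 := sum_quadChar_sq
  have hNsum : ∑ r : F, Nz r = q^(2*k+3) := by
    rw [Finset.sum_congr rfl fun r _ => hN r, Finset.sum_add_distrib, Finset.sum_const,
      Finset.card_univ, nsmul_eq_mul]
    have h1 : ∑ r : F, ε * (quadraticChar F (-r) : ℤ) * q^(k+1)
        = (ε * q^(k+1)) * ∑ r : F, (quadraticChar F (-r) : ℤ) := by
      rw [Finset.mul_sum]; exact Finset.sum_congr rfl fun r _ => by ring
    rw [h1, hnegchi, mul_zero, add_zero, ← hqdef]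
    ring
  have hre : ∀ u : F, ∑ r : F, Gz (r - u) = ∑ s : F, Gz s := by
    intro u
    calc ∑ r : F, Gz (r - u)
        = ∑ r : F, ((fun s => Gz s) (Equiv.subRight u r)) := by
          refine Finset.sum_congr rfl fun r _ => by simp
      _ = ∑ s : F, Gz s := Equiv.sum_comp (Equiv.subRight u) (fun s => Gz s)
  have hGsum : ∑ s : F, Gz s = q^(2*k+2) := by
    apply mul_left_cancel₀ hq0
    calc q * ∑ s : F, Gz s
        = ∑ _l : F, ∑ s : F, Gz s := by
          rw [Finset.sum_const, Finset.card_univ, nsmul_eq_mul, ← hqdef]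
      _ = ∑ l : F, ∑ r : F, Gz (r - l^2*t) :=
          Finset.sum_congr rfl fun l _ => (hre (l^2*t)).symm
      _ = ∑ r : F, ∑ l : F, Gz (r - l^2*t) := Finset.sum_comm
      _ = ∑ r : F, Nz r := Finset.sum_congr rfl fun r _ => (hfib r).symm
      _ = q^(2*k+3) := hNsum
      _ = q * q^(2*k+2) := by ring
  have hS2a : ∑ r : F, (quadraticChar F (-r) : ℤ) * Nz r = ε * q^(k+1) * (q - 1) := by
    have h1 : ∀ r : F, (quadraticChar F (-r) : ℤ) * Nz r
        = q^(2*k+2) * (quadraticChar F (-r) : ℤ)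
          + (ε * q^(k+1)) * ((quadraticChar F (-r) : ℤ) * (quadraticChar F (-r))) := by
      intro r; rw [hN r]; ring
    rw [Finset.sum_congr rfl fun r _ => h1 r, Finset.sum_add_distrib, ← Finset.mul_sum,
      ← Finset.mul_sum, hnegchi, hnegsq, mul_zero, zero_add]
  have hK : ∀ s : F, ∑ l : F, (quadraticChar F (-(s + l^2*t)) : ℤ)
      = χt * (if s = 0 then q - 1 else -1) := by
    intro s
    have h := sum_sq_fiber hF (fun u => (quadraticChar F (-(s + u*t)) : ℤ))
    rw [h]
    have h1 : ∀ u : F, (1 + (quadraticChar F u : ℤ)) * (quadraticChar F (-(s + u*t)))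
        = (quadraticChar F (-(s + u*t)) : ℤ)
          + (quadraticChar F u : ℤ) * (quadraticChar F (-(s + u*t))) := by
      intro u; ring
    rw [Finset.sum_congr rfl fun u _ => h1 u, Finset.sum_add_distrib]
    have hpart1 : ∑ u : F, (quadraticChar F (-(s + u*t)) : ℤ) = 0 := by
      calc ∑ u : F, (quadraticChar F (-(s + u*t)) : ℤ)
          = ∑ u : F, (quadraticChar F (-s + (-t) * u) : ℤ) := by
            refine Finset.sum_congr rfl fun u _ => ?_
            congr 1
            ring
        _ = 0 := sum_quadChar_affine hF htneg (-s)
    have hpart2 : ∑ u : F, (quadraticChar F u : ℤ) * (quadraticChar F (-(s + u*t)))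
        = χt * (if s = 0 then q - 1 else -1) := by
      have h2' : ∀ u : F, (quadraticChar F u : ℤ) * (quadraticChar F (-(s + u*t)))
          = χt * ((quadraticChar F u : ℤ) * (quadraticChar F (u + s*t⁻¹))) := by
        intro u
        have he : -(s + u*t) = (-t) * (u + s*t⁻¹) := by
          field_simp
          ring
        rw [he, map_mul]
        push_cast
        rw [← hχt]
        ring
      rw [Finset.sum_congr rfl fun u _ => h2' u, ← Finset.mul_sum,
        sum_quadChar_mul hF (s*t⁻¹)]
      congr 1
      have hiff : s * t⁻¹ = 0 ↔ s = 0 := by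
        constructor
        · intro h'
          rcases mul_eq_zero.1 h' with h'' | h''
          · exact h''
          · exact absurd h'' (inv_ne_zero ht)
        · intro h'; rw [h', zero_mul]
      rw [if_congr hiff rfl rfl, ← hqdef]
    rw [hpart1, hpart2, zero_add]
  have hS2b : ∑ r : F, (quadraticChar F (-r) : ℤ) * Nz r
      = χt * (q * Gz 0 - q^(2*k+2)) := by
    calc ∑ r : F, (quadraticChar F (-r) : ℤ) * Nz r
        = ∑ r : F, ∑ l : F, (quadraticChar F (-r) : ℤ) * Gz (r - l^2*t) := by
          refine Finset.sum_congr rfl fun r _ => ?_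
          rw [hfib r, Finset.mul_sum]
      _ = ∑ l : F, ∑ r : F, (quadraticChar F (-r) : ℤ) * Gz (r - l^2*t) :=
          Finset.sum_comm
      _ = ∑ l : F, ∑ s : F, (quadraticChar F (-(s + l^2*t)) : ℤ) * Gz s := by
          refine Finset.sum_congr rfl fun l _ => ?_
          have h := Equiv.sum_comp (Equiv.addRight (l^2*t))
            (fun r : F => (quadraticChar F (-r) : ℤ) * Gz (r - l^2*t))
          rw [← h]
          refine Finset.sum_congr rfl fun s _ => ?_
          simp only [Equiv.coe_addRight]
          rw [add_sub_cancel_right]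
      _ = ∑ s : F, (∑ l : F, (quadraticChar F (-(s + l^2*t)) : ℤ)) * Gz s := by
          rw [Finset.sum_comm]
          exact Finset.sum_congr rfl fun s _ => by rw [Finset.sum_mul]
      _ = ∑ s : F, (χt * (if s = 0 then q - 1 else -1)) * Gz s :=
          Finset.sum_congr rfl fun s _ => by rw [hK s]
      _ = χt * (q * Gz 0 - ∑ s : F, Gz s) := by
          have h1 : ∀ s : F, (χt * (if s = 0 then q - 1 else -1)) * Gz s
              = χt * ((if s = 0 then q * Gz s else 0) - Gz s) := by
            intro s; split_ifs with h <;> ring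
          rw [Finset.sum_congr rfl fun s _ => h1 s, ← Finset.mul_sum,
            Finset.sum_sub_distrib,
            Finset.sum_ite_eq' univ (0:F) (fun s => q * Gz s), if_pos (mem_univ _)]
      _ = χt * (q * Gz 0 - q^(2*k+2)) := by rw [hGsum]
  have hmain : χt * (q * Gz 0 - q^(2*k+2)) = ε * q^(k+1) * (q - 1) := by
    rw [← hS2b, hS2a]
  have hGz0 : q * Gz 0 = q * (q^(2*k+1) + ε * χt * (q^(k+1) - q^k)) := by
    linear_combination χt * hmain - (q * Gz 0 - q^(2*k+2)) * hχt2
  have hGz0' : Gz 0 = q^(2*k+1) + ε * χt * (q^(k+1) - q^k) := mul_left_cancel₀ hq0 hGz0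
  have hinter := inter_count hi htc ht h2 c₁ c₂ r₁ r₂ hcdef hD
  calc ((spherePts (Qi a i) (c₁, r₁) ∩ spherePts (Qi a i) (c₂, r₂)).card : ℤ)
      = Gz 0 := by rw [hinter]
    _ = q^(2*k+1) + ε * χt * (q^(k+1) - q^k) := hGz0'
end

section
/- Let d ≥ 3 be odd, let q be an odd prime power, let i ∈ {3,4}, and write Q = Q_i^d. Let s₁, s₂ be Q-spheres with centers c₁, c₂ and radii r₁, r₂ such that t := Q(c₁−c₂) ≠ 0 and D(t,r₁,r₂) ≠ 0. Then |s₁ ∩ s₂| = q^{d−2} + (−1)^{i}·η(−t)·q^{(d−3)/2}. -/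
open Finset

open AddChar

section Aux
variable {F : Type*} [Field F] [Fintype F] [DecidableEq F]
variable {R : Type*} [Field R]

/-- Sum of products of the two components over all indices. -/
def Pform {m : ℕ} (z : Fin m → F × F) : F := ∑ j, (z j).1 * (z j).2

/-- Polarized pairing. -/
def Lform {m : ℕ} (w z : Fin m → F × F) : F := ∑ j, ((w j).2 * (z j).1 + (w j).1 * (z j).2)

lemma addChar_map_sum {ι : Type*} (ψ : AddChar F R) (s : Finset ι) (f : ι → F) :
    ψ (∑ j ∈ s, f j) = ∏ j ∈ s, ψ (f j) := by
  classical
  induction s using Finset.induction_on with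
  | empty => simp
  | insert _ _ h ih => rw [Finset.sum_insert h, Finset.prod_insert h, map_add_eq_mul, ih]

lemma ind_sum {ψ : AddChar F R} (hψ : ψ.IsPrimitive) (v : F) :
    ∑ α : F, ψ (α * v) = if v = 0 then (Fintype.card F : R) else 0 := by
  rw [AddChar.sum_mulShift v hψ]; split_ifs <;> simp

lemma pair_sum {ψ : AddChar F R} (hψ : ψ.IsPrimitive) {γ : F} (hγ : γ ≠ 0) (lam mu : F) :
    ∑ p : F × F, ψ (γ * (p.1 * p.2) + lam * p.1 + mu * p.2)
      = (Fintype.card F : R) * ψ (-(lam * mu) / γ) := by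
  rw [Fintype.sum_prod_type]
  have h1 : ∀ x y : F, ψ (γ * (x * y) + lam * x + mu * y)
      = ψ (lam * x) * ψ (y * (γ * x + mu)) := by
    intro x y
    rw [← map_add_eq_mul]
    ring_nf
  simp_rw [h1, ← Finset.mul_sum, AddChar.sum_mulShift _ hψ, Nat.cast_ite, Nat.cast_zero]
  have h2 : ∀ x : F, (γ * x + mu = 0) = (x = -mu / γ) := by
    intro x
    simp only [eq_iff_iff]
    rw [eq_div_iff hγ]
    constructor
    · intro h; linear_combination h
    · intro h; linear_combination h
  simp_rw [h2, mul_ite, mul_zero]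
  rw [Finset.sum_ite_eq' Finset.univ (-mu/γ) (fun x => ψ (lam * x) * (Fintype.card F : R))]
  rw [if_pos (Finset.mem_univ _), mul_comm]
  congr 1
  congr 1
  field_simp

end Aux

section Aux2
variable {F : Type*} [Field F] [Fintype F] [DecidableEq F]
variable {R : Type*} [Field R]

/-- The quadratic character with values in `R`. -/
noncomputable def qchar (F R : Type*) [Field F] [Fintype F] [DecidableEq F] [Field R] :
    MulChar F R :=
  (quadraticChar F).ringHomComp (Int.castRingHom R)

lemma qchar_ne_zero {γ : F} (hγ : γ ≠ 0) : qchar F R γ ≠ 0 := by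
  have h : qchar F R γ * qchar F R γ⁻¹ = 1 := by
    rw [← map_mul, mul_inv_cancel₀ hγ, map_one]
  exact left_ne_zero_of_mul_eq_one h

lemma qchar_inv {γ : F} (hγ : γ ≠ 0) : qchar F R γ⁻¹ = qchar F R γ := by
  have h : qchar F R γ * qchar F R γ⁻¹ = 1 := by
    rw [← map_mul, mul_inv_cancel₀ hγ, map_one]
  have h2 : qchar F R γ * qchar F R γ = 1 := by
    have := quadraticChar_sq_one hγ
    have : ((quadraticChar F γ * quadraticChar F γ : ℤ) : R) = ((1 : ℤ) : R) := by
      rw [← pow_two, this]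
    simpa [qchar, MulChar.ringHomComp] using this
  exact mul_left_cancel₀ (qchar_ne_zero hγ) (h.trans h2.symm)

lemma sq_sum {ψ : AddChar F R} (hψ : ψ.IsPrimitive) (hF2 : ringChar F ≠ 2)
    {γ : F} (hγ : γ ≠ 0) :
    ∑ v : F, ψ (γ * v ^ 2) = qchar F R γ * gaussSum (qchar F R) ψ := by
  classical
  -- group by the value of v^2
  have fib : ∑ v : F, ψ (γ * v ^ 2)
      = ∑ u : F, ((Finset.univ.filter fun v : F => v ^ 2 = u).card : R) * ψ (γ * u) := by
    rw [← Finset.sum_fiberwise_of_maps_to (fun v _ => Finset.mem_univ (v ^ 2))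
      (fun v => ψ (γ * v ^ 2))]
    refine Finset.sum_congr rfl fun u _ => ?_
    rw [Finset.sum_congr rfl (fun v hv => ?_), Finset.sum_const, nsmul_eq_mul]
    rw [(Finset.mem_filter.mp hv).2]
  have card_eq : ∀ u : F, ((Finset.univ.filter fun v : F => v ^ 2 = u).card : R)
      = qchar F R u + 1 := by
    intro u
    have h := quadraticChar_card_sqrts hF2 u
    have hs : ({x : F | x ^ 2 = u}.toFinset) = Finset.univ.filter fun v : F => v ^ 2 = u := by
      ext x; simp
    rw [hs] at h
    have : (((Finset.univ.filter fun v : F => v ^ 2 = u).card : ℤ) : R)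
        = ((quadraticChar F u + 1 : ℤ) : R) := congrArg (fun z : ℤ => (z : R)) h
    simpa [qchar, MulChar.ringHomComp] using this
  rw [fib]
  simp_rw [card_eq, add_mul, one_mul, Finset.sum_add_distrib]
  have z1 : ∑ u : F, ψ (γ * u) = 0 := by
    simp_rw [mul_comm γ]
    rw [AddChar.sum_mulShift _ hψ, if_neg hγ, Nat.cast_zero]
  rw [z1, add_zero]
  -- substitute u ↦ γ⁻¹ u
  have this : ∑ u : F, qchar F R (γ⁻¹ * (γ * u)) * ψ (γ * u)
      = ∑ u : F, qchar F R (γ⁻¹ * u) * ψ u :=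
    Fintype.sum_bijective _ (mulLeft_bijective₀ γ hγ)
      (fun u => qchar F R (γ⁻¹ * (γ * u)) * ψ (γ * u))
      (fun u => qchar F R (γ⁻¹ * u) * ψ u) (fun u => rfl)
  calc ∑ u : F, qchar F R u * ψ (γ * u)
      = ∑ u : F, qchar F R (γ⁻¹ * (γ * u)) * ψ (γ * u) := by
        refine Finset.sum_congr rfl fun u _ => ?_
        rw [← mul_assoc, inv_mul_cancel₀ hγ, one_mul]
    _ = ∑ u : F, qchar F R (γ⁻¹ * u) * ψ u := this
    _ = qchar F R γ * gaussSum (qchar F R) ψ := by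
        simp_rw [map_mul, mul_assoc, ← Finset.mul_sum, qchar_inv hγ, gaussSum]

lemma quad_sum {ψ : AddChar F R} (hψ : ψ.IsPrimitive) (hF2 : ringChar F ≠ 2)
    {γ : F} (hγ : γ ≠ 0) (lam : F) :
    ∑ v : F, ψ (γ * v ^ 2 + lam * v)
      = qchar F R γ * gaussSum (qchar F R) ψ * ψ (-lam ^ 2 / (4 * γ)) := by
  have h2 : (2 : F) ≠ 0 := Ring.two_ne_zero hF2
  have key : ∀ v : F, γ * v ^ 2 + lam * v
      = γ * (v + lam / (2 * γ)) ^ 2 + -lam ^ 2 / (4 * γ) := by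
    intro v
    have h4 : (4 : F) ≠ 0 := by
      have := mul_ne_zero h2 h2; norm_num at this; exact this
    field_simp
    ring
  simp_rw [key]
  have := Equiv.sum_comp (Equiv.addRight (lam / (2 * γ)))
    (fun v => ψ (γ * v ^ 2 + -lam ^ 2 / (4 * γ)))
  simp only [Equiv.coe_addRight] at this
  rw [this]
  simp_rw [map_add_eq_mul, ← Finset.sum_mul, sq_sum hψ hF2 hγ]

end Aux2
section Aux3
variable {F : Type*} [Field F] [Fintype F] [DecidableEq F]
variable {R : Type*} [Field R]

lemma Pform_sub {m : ℕ} (z w : Fin m → F × F) :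
    Pform (z - w) = Pform z - Lform w z + Pform w := by
  simp only [Pform, Lform, ← Finset.sum_add_distrib, ← Finset.sum_sub_distrib]
  refine Finset.sum_congr rfl fun j _ => ?_
  simp only [Pi.sub_apply, Prod.fst_sub, Prod.snd_sub]
  ring

lemma Lform_add_right {m : ℕ} (w z z' : Fin m → F × F) :
    Lform w (z + z') = Lform w z + Lform w z' := by
  simp only [Lform, ← Finset.sum_add_distrib]
  refine Finset.sum_congr rfl fun j _ => ?_
  simp only [Pi.add_apply, Prod.fst_add, Prod.snd_add]
  ring

/-- Lemma A : the hyperbolic-pairs character sum. -/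
lemma pairs_char_sum {ψ : AddChar F R} (hψ : ψ.IsPrimitive) {γ : F} (hγ : γ ≠ 0)
    {m : ℕ} (w : Fin m → F × F) :
    ∑ z : Fin m → F × F, ψ (γ * Pform z + Lform w z)
      = (Fintype.card F : R) ^ m * ψ (-Pform w / γ) := by
  have step1 : ∀ z : Fin m → F × F, ψ (γ * Pform z + Lform w z)
      = ∏ j, ψ (γ * ((z j).1 * (z j).2) + (w j).2 * (z j).1 + (w j).1 * (z j).2) := by
    intro z
    rw [← addChar_map_sum]
    congr 1
    simp only [Pform, Lform, Finset.mul_sum, ← Finset.sum_add_distrib]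
    refine Finset.sum_congr rfl fun j _ => ?_
    ring
  simp_rw [step1]
  have hps := Fintype.prod_sum fun (j : Fin m) (p : F × F) =>
    ψ (γ * (p.1 * p.2) + (w j).2 * p.1 + (w j).1 * p.2)
  rw [← hps]
  have step2 : ∀ j : Fin m,
      ∑ p : F × F, ψ (γ * (p.1 * p.2) + (w j).2 * p.1 + (w j).1 * p.2)
        = (Fintype.card F : R) * ψ (-((w j).1 * (w j).2) / γ) := by
    intro j
    rw [pair_sum hψ hγ ((w j).2) ((w j).1)]
    congr 2
    ring
  simp_rw [step2]
  rw [Finset.prod_mul_distrib, Finset.prod_const, Finset.card_univ, Fintype.card_fin,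
    ← addChar_map_sum]
  congr 1
  congr 1
  simp [Pform, neg_div, Finset.sum_div]

/-- Lemma Z : sum of a nontrivial "linear" character over all of `Y` vanishes. -/
lemma linear_char_sum_eq_zero {ψ : AddChar F R} (hψ : ψ.IsPrimitive) (hF2 : ringChar F ≠ 2)
    {m : ℕ} (zc : Fin m → F × F) (wc b : F) {u t : F} (hu : u ≠ 0)
    (ht : Pform zc + b * wc ^ 2 = t) (htne : t ≠ 0) :
    ∑ y : (Fin m → F × F) × F, ψ (u * (Lform zc y.1 + 2 * b * wc * y.2)) = 0 := by
  have h2 : (2 : F) ≠ 0 := Ring.two_ne_zero hF2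
  set ℓ : ((Fin m → F × F) × F) →+ F := AddMonoidHom.mk'
      (fun y => u * (Lform zc y.1 + 2 * b * wc * y.2)) (by
    intro y z
    simp only [Prod.fst_add, Prod.snd_add, Lform_add_right]
    ring) with hℓ
  have hsum : ∑ y : (Fin m → F × F) × F, (ψ.compAddMonoidHom ℓ) y = 0 := by
    apply AddChar.sum_eq_zero_of_ne_one
    rw [AddChar.ne_one_iff]
    obtain ⟨v, hv⟩ := AddChar.ne_one_iff.mp (hψ hu)
    rw [AddChar.mulShift_apply] at hv
    set s : F := v / (2 * t) with hs
    refine ⟨((fun j => (s * (zc j).1, s * (zc j).2)), s * wc), ?_⟩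
    have hL : Lform zc (fun j => (s * (zc j).1, s * (zc j).2)) = 2 * s * Pform zc := by
      simp only [Lform, Pform, Finset.mul_sum]
      refine Finset.sum_congr rfl fun j _ => ?_
      ring
    simp only [AddChar.compAddMonoidHom_apply, hℓ, AddMonoidHom.mk'_apply, hL]
    have harg : u * (2 * s * Pform zc + 2 * b * wc * (s * wc)) = u * v := by
      have : 2 * s * Pform zc + 2 * b * wc * (s * wc) = 2 * s * t := by
        rw [← ht]; ring
      rw [this, hs]
      field_simp
    rw [harg]
    exact hv
  exact hsum

end Aux3
section Main
variable {F : Type*} [Field F] [Fintype F] [DecidableEq F]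
variable {R : Type*} [Field R] [CharZero R]

lemma main_count {ψ : AddChar F R} (hψ : ψ.IsPrimitive) (hF2 : ringChar F ≠ 2)
    {m : ℕ} {b : F} (hb : b ≠ 0) (zc : Fin m → F × F) (wc : F) (r₁ r₂ t : F)
    (htdef : Pform zc + b * wc ^ 2 = t) (ht : t ≠ 0)
    (hD : t^2 + r₁^2 + r₂^2 - 2*(t*r₁ + t*r₂ + r₁*r₂) ≠ 0) :
    ((Finset.univ.filter fun y : (Fin m → F × F) × F =>
        Pform y.1 + b * y.2 ^ 2 = r₂ ∧ Pform (y.1 - zc) + b * (y.2 - wc) ^ 2 = r₁).card : R)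
        * (Fintype.card F : R) ^ 2
      = (Fintype.card F : R) ^ (2 * m + 1)
        - (Fintype.card F : R) ^ (m + 1) * qchar F R (b * t) := by
  have h2 : (2 : F) ≠ 0 := Ring.two_ne_zero hF2
  have h4 : (4 : F) ≠ 0 := by
    have := mul_ne_zero h2 h2; norm_num at this; exact this
  set q : R := (Fintype.card F : R) with hq
  set g : R := gaussSum (qchar F R) ψ with hg
  set s' : F := t - r₁ + r₂ with hs'
  set u : F := (s' ^ 2 - 4 * t * r₂) / (4 * t) with hu
  have hu0 : u ≠ 0 := by
    rw [hu]
    apply div_ne_zero _ (mul_ne_zero h4 ht)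
    intro h
    apply hD
    rw [hs'] at h
    linear_combination h
  have expand : ∀ y : (Fin m → F × F) × F,
      Pform (y.1 - zc) + b * (y.2 - wc) ^ 2
        = (Pform y.1 + b * y.2 ^ 2) - (Lform zc y.1 + 2 * b * wc * y.2) + t := by
    intro y
    rw [Pform_sub, ← htdef]
    ring
  -- Step B+C : express N * q^2 as a triple character sum
  have stepBC : ((Finset.univ.filter fun y : (Fin m → F × F) × F =>
        Pform y.1 + b * y.2 ^ 2 = r₂ ∧ Pform (y.1 - zc) + b * (y.2 - wc) ^ 2 = r₁).card : R)
        * q ^ 2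
      = ∑ y : (Fin m → F × F) × F, ∑ α : F, ∑ β : F,
          ψ (α * ((Pform y.1 + b * y.2 ^ 2) - r₂)
            + β * ((Pform (y.1 - zc) + b * (y.2 - wc) ^ 2) - r₁)) := by
    have stepC : ∀ v w : F,
        (if v = 0 then q else 0) * (if w = 0 then q else 0)
          = ∑ α : F, ∑ β : F, ψ (α * v + β * w) := by
      intro v w
      rw [← ind_sum hψ v, ← ind_sum hψ w, Finset.sum_mul_sum]
      simp_rw [map_add_eq_mul]
    have key : ∀ y : (Fin m → F × F) × F,
        (if (Pform y.1 + b * y.2 ^ 2 = r₂ ∧ Pform (y.1 - zc) + b * (y.2 - wc) ^ 2 = r₁)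
          then (1:R) else 0) * q ^ 2
        = ∑ α : F, ∑ β : F,
            ψ (α * ((Pform y.1 + b * y.2 ^ 2) - r₂)
              + β * ((Pform (y.1 - zc) + b * (y.2 - wc) ^ 2) - r₁)) := by
      intro y
      rw [← stepC]
      simp only [sub_eq_zero]
      split_ifs with hc hA hB <;> first | ring1 | tauto
    rw [Finset.card_filter]
    push_cast
    rw [Finset.sum_mul]
    exact Finset.sum_congr rfl fun y _ => key y
  rw [stepBC]
  -- reorder and reparametrize : ∑ γ ∑ β ∑ y
  have reorder : (∑ y : (Fin m → F × F) × F, ∑ α : F, ∑ β : F,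
          ψ (α * ((Pform y.1 + b * y.2 ^ 2) - r₂)
            + β * ((Pform (y.1 - zc) + b * (y.2 - wc) ^ 2) - r₁)))
      = ∑ γ : F, ∑ β : F, ∑ y : (Fin m → F × F) × F,
          ψ (γ * (Pform y.1 + b * y.2 ^ 2)
            - β * (Lform zc y.1 + 2 * b * wc * y.2)
            + β * t - β * r₁ - (γ - β) * r₂) := by
    calc (∑ y : (Fin m → F × F) × F, ∑ α : F, ∑ β : F,
          ψ (α * ((Pform y.1 + b * y.2 ^ 2) - r₂)
            + β * ((Pform (y.1 - zc) + b * (y.2 - wc) ^ 2) - r₁)))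
        = ∑ α : F, ∑ y : (Fin m → F × F) × F, ∑ β : F,
          ψ (α * ((Pform y.1 + b * y.2 ^ 2) - r₂)
            + β * ((Pform (y.1 - zc) + b * (y.2 - wc) ^ 2) - r₁)) := Finset.sum_comm
      _ = ∑ α : F, ∑ β : F, ∑ y : (Fin m → F × F) × F,
          ψ (α * ((Pform y.1 + b * y.2 ^ 2) - r₂)
            + β * ((Pform (y.1 - zc) + b * (y.2 - wc) ^ 2) - r₁)) :=
          Finset.sum_congr rfl fun α _ => Finset.sum_comm
      _ = ∑ β : F, ∑ α : F, ∑ y : (Fin m → F × F) × F,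
          ψ (α * ((Pform y.1 + b * y.2 ^ 2) - r₂)
            + β * ((Pform (y.1 - zc) + b * (y.2 - wc) ^ 2) - r₁)) := Finset.sum_comm
      _ = ∑ β : F, ∑ γ : F, ∑ y : (Fin m → F × F) × F,
          ψ (γ * (Pform y.1 + b * y.2 ^ 2)
            - β * (Lform zc y.1 + 2 * b * wc * y.2)
            + β * t - β * r₁ - (γ - β) * r₂) := by
          refine Finset.sum_congr rfl fun β _ => ?_
          refine Fintype.sum_bijective (· + β) (Equiv.addRight β).bijective _ _ fun α => ?_
          refine Finset.sum_congr rfl fun y _ => ?_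
          rw [expand y]
          congr 1
          ring
      _ = ∑ γ : F, ∑ β : F, ∑ y : (Fin m → F × F) × F,
          ψ (γ * (Pform y.1 + b * y.2 ^ 2)
            - β * (Lform zc y.1 + 2 * b * wc * y.2)
            + β * t - β * r₁ - (γ - β) * r₂) := Finset.sum_comm
  rw [reorder]
  rw [← Finset.add_sum_erase _ _ (Finset.mem_univ (0:F))]
  -- the γ = 0 term
  have hzero : (∑ β : F, ∑ y : (Fin m → F × F) × F,
          ψ ((0:F) * (Pform y.1 + b * y.2 ^ 2)
            - β * (Lform zc y.1 + 2 * b * wc * y.2)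
            + β * t - β * r₁ - ((0:F) - β) * r₂))
      = q ^ (2 * m + 1) := by
    rw [← Finset.add_sum_erase _ _ (Finset.mem_univ (0:F))]
    have hb0 : (∑ y : (Fin m → F × F) × F,
        ψ ((0:F) * (Pform y.1 + b * y.2 ^ 2)
            - (0:F) * (Lform zc y.1 + 2 * b * wc * y.2)
            + (0:F) * t - (0:F) * r₁ - ((0:F) - (0:F)) * r₂))
        = q ^ (2 * m + 1) := by
      have : ∀ y : (Fin m → F × F) × F,
          ψ ((0:F) * (Pform y.1 + b * y.2 ^ 2)
            - (0:F) * (Lform zc y.1 + 2 * b * wc * y.2)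
            + (0:F) * t - (0:F) * r₁ - ((0:F) - (0:F)) * r₂) = 1 := by
        intro y
        have : ((0:F) * (Pform y.1 + b * y.2 ^ 2)
            - (0:F) * (Lform zc y.1 + 2 * b * wc * y.2)
            + (0:F) * t - (0:F) * r₁ - ((0:F) - (0:F)) * r₂) = 0 := by ring
        rw [this, AddChar.map_zero_eq_one]
      simp_rw [this]
      rw [Finset.sum_const, Finset.card_univ, nsmul_eq_mul, mul_one]
      simp only [Fintype.card_prod, Fintype.card_fun, Fintype.card_fin]
      push_cast
      rw [hq]
      ring
    have hbne : ∀ β ∈ Finset.univ.erase (0:F),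
        (∑ y : (Fin m → F × F) × F,
          ψ ((0:F) * (Pform y.1 + b * y.2 ^ 2)
            - β * (Lform zc y.1 + 2 * b * wc * y.2)
            + β * t - β * r₁ - ((0:F) - β) * r₂)) = 0 := by
      intro β hβ
      have hβ0 : β ≠ 0 := (Finset.mem_erase.mp hβ).1
      have harg : ∀ y : (Fin m → F × F) × F,
          ((0:F) * (Pform y.1 + b * y.2 ^ 2)
            - β * (Lform zc y.1 + 2 * b * wc * y.2)
            + β * t - β * r₁ - ((0:F) - β) * r₂)
          = (-β) * (Lform zc y.1 + 2 * b * wc * y.2) + β * (t - r₁ + r₂) := by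
        intro y; ring
      simp_rw [harg, map_add_eq_mul, ← Finset.sum_mul]
      rw [linear_char_sum_eq_zero hψ hF2 zc wc b (neg_ne_zero.mpr hβ0) htdef ht, zero_mul]
    rw [Finset.sum_congr rfl hbne, Finset.sum_const, smul_zero, add_zero, hb0]
  rw [hzero]
  -- the γ ≠ 0 terms
  have hS : ∀ γ ∈ Finset.univ.erase (0:F),
      (∑ β : F, ∑ y : (Fin m → F × F) × F,
          ψ (γ * (Pform y.1 + b * y.2 ^ 2)
            - β * (Lform zc y.1 + 2 * b * wc * y.2)
            + β * t - β * r₁ - (γ - β) * r₂))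
      = q ^ m * qchar F R (-(b * t)) * (g * g) * ψ (γ * u) := by
    intro γ hγ
    have hγ0 : γ ≠ 0 := (Finset.mem_erase.mp hγ).1
    have hγb : γ * b ≠ 0 := mul_ne_zero hγ0 hb
    -- inner sum over y for fixed β
    have inner : ∀ β : F,
        (∑ y : (Fin m → F × F) × F,
          ψ (γ * (Pform y.1 + b * y.2 ^ 2)
            - β * (Lform zc y.1 + 2 * b * wc * y.2)
            + β * t - β * r₁ - (γ - β) * r₂))
        = q ^ m * qchar F R (γ * b) * g
            * ψ ((-t / γ) * β ^ 2 + s' * β + (- γ * r₂)) := by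
      intro β
      set w' : Fin m → F × F := fun j => (-β * (zc j).1, -β * (zc j).2) with hw'
      have hL : ∀ z : Fin m → F × F, Lform w' z = -β * Lform zc z := by
        intro z
        simp only [Lform, hw', Finset.mul_sum]
        exact Finset.sum_congr rfl fun j _ => by ring
      have hP : Pform w' = β ^ 2 * Pform zc := by
        simp only [Pform, hw', Finset.mul_sum]
        exact Finset.sum_congr rfl fun j _ => by ring
      rw [Fintype.sum_prod_type]
      have harg : ∀ (z : Fin m → F × F) (w : F),
          ψ (γ * (Pform z + b * w ^ 2)
            - β * (Lform zc z + 2 * b * wc * w)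
            + β * t - β * r₁ - (γ - β) * r₂)
          = ψ (γ * Pform z + Lform w' z)
            * (ψ ((γ * b) * w ^ 2 + (-(2 * b * wc * β)) * w)
              * ψ (β * t - β * r₁ - (γ - β) * r₂)) := by
        intro z w
        rw [← map_add_eq_mul, ← map_add_eq_mul]
        congr 1
        rw [hL]
        ring
      simp_rw [harg, ← Finset.mul_sum]
      rw [← Finset.sum_mul, ← Finset.sum_mul, pairs_char_sum hψ hγ0 w',
        quad_sum hψ hF2 hγb (-(2 * b * wc * β))]
      rw [hP, ← hg, ← hq]
      have hadd : -(β ^ 2 * Pform zc) / γ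
          + (-(-(2 * b * wc * β)) ^ 2 / (4 * (γ * b))
            + (β * t - β * r₁ - (γ - β) * r₂))
          = -t / γ * β ^ 2 + s' * β + -γ * r₂ := by
        rw [hs', ← htdef]
        field_simp
        ring
      have e1 : ψ (-(β ^ 2 * Pform zc) / γ)
          * (ψ (-(-(2 * b * wc * β)) ^ 2 / (4 * (γ * b)))
            * ψ (β * t - β * r₁ - (γ - β) * r₂))
          = ψ (-t / γ * β ^ 2 + s' * β + -γ * r₂) := by
        rw [← map_add_eq_mul, ← map_add_eq_mul, hadd]
      linear_combination (q ^ m * qchar F R (γ * b) * g) * e1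
    simp_rw [inner]
    -- now sum over β
    rw [← Finset.mul_sum]
    have hβsum : (∑ β : F, ψ ((-t / γ) * β ^ 2 + s' * β + (- γ * r₂)))
        = qchar F R (-t / γ) * g * ψ (γ * u - (- γ * r₂)) * ψ (- γ * r₂) := by
      have hmt : -t / γ ≠ 0 := div_ne_zero (neg_ne_zero.mpr ht) hγ0
      have : ∀ β : F, ψ ((-t / γ) * β ^ 2 + s' * β + (- γ * r₂))
          = ψ ((-t / γ) * β ^ 2 + s' * β) * ψ (- γ * r₂) := by
        intro β; rw [← map_add_eq_mul]
      simp_rw [this, ← Finset.sum_mul, quad_sum hψ hF2 hmt s']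
      rw [← hg]
      congr 3
      rw [hu]
      field_simp
      ring
    rw [hβsum]
    have e2 : ψ (γ * u - -γ * r₂) * ψ (-γ * r₂) = ψ (γ * u) := by
      rw [← map_add_eq_mul]
      congr 1
      ring
    have hqq : qchar F R (γ * b) * qchar F R (-t / γ) = qchar F R (-(b * t)) := by
      rw [← map_mul]
      congr 1
      field_simp
    linear_combination (q ^ m * qchar F R (γ * b) * qchar F R (-t / γ) * g * g) * e2
      + (q ^ m * g * g * ψ (γ * u)) * hqq
  rw [Finset.sum_congr rfl hS]
  rw [← Finset.mul_sum]
  -- evaluate the remaining geometric sum and the Gauss sum square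
  have herase : (∑ γ ∈ Finset.univ.erase (0:F), ψ (γ * u)) = -1 := by
    have h0 : (∑ γ : F, ψ (γ * u)) = 0 := by
      rw [ind_sum hψ u, if_neg hu0]
    have this2 : ψ ((0:F) * u) + ∑ γ ∈ Finset.univ.erase (0:F), ψ (γ * u)
        = ∑ γ : F, ψ (γ * u) :=
      Finset.add_sum_erase Finset.univ (fun γ : F => ψ (γ * u)) (Finset.mem_univ 0)
    rw [h0, zero_mul, AddChar.map_zero_eq_one] at this2
    linear_combination this2
  rw [herase]
  have hne1 : qchar F R ≠ 1 :=
    (MulChar.ringHomComp_ne_one_iff Int.cast_injective).mpr (quadraticChar_ne_one hF2)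
  have hquad : (qchar F R).IsQuadratic := (quadraticChar_isQuadratic F).comp _
  have hg2 : g * g = qchar F R (-1) * q := by
    rw [hg, ← pow_two]
    exact gaussSum_sq hne1 hquad hψ
  have hneg : qchar F R (-(b * t)) * qchar F R (-1) = qchar F R (b * t) := by
    rw [← map_mul]
    norm_num
  rw [hg2]
  have hfin : q ^ m * qchar F R (-(b * t)) * (qchar F R (-1) * q) * (-1)
      = -(q ^ (m + 1) * qchar F R (b * t)) := by
    rw [← hneg]; ring
  rw [hfin]
  ring
end Main
section Bridge
variable {F : Type*} [Field F] [Fintype F] [DecidableEq F]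

/-- Split a vector of odd length into pairs plus the last coordinate. -/
def Dmap {d m : ℕ} (hd : d = 2 * m + 1) (x : Fin d → F) : (Fin m → F × F) × F :=
  ((fun j => (x ⟨2 * j.1, by have := j.2; omega⟩, x ⟨2 * j.1 + 1, by have := j.2; omega⟩)),
    x ⟨2 * m, by omega⟩)

/-- Inverse of `Dmap`. -/
def Emap {d m : ℕ} (hd : d = 2 * m + 1) (y : (Fin m → F × F) × F) : Fin d → F :=
  fun k => if h : (k : ℕ) < 2 * m then
      (if (k : ℕ) % 2 = 0 then (y.1 ⟨(k : ℕ) / 2, by omega⟩).1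
        else (y.1 ⟨(k : ℕ) / 2, by omega⟩).2)
    else y.2

lemma Dmap_sub {d m : ℕ} (hd : d = 2 * m + 1) (x y : Fin d → F) :
    Dmap hd (x - y) = Dmap hd x - Dmap hd y := by
  unfold Dmap
  refine Prod.ext ?_ ?_
  · funext j
    simp [Prod.ext_iff]
  · simp

lemma Emap_Dmap {d m : ℕ} (hd : d = 2 * m + 1) (x : Fin d → F) :
    Emap hd (Dmap hd x) = x := by
  funext k
  unfold Emap Dmap
  by_cases h : (k : ℕ) < 2 * m
  · rw [dif_pos h]
    by_cases h2 : (k : ℕ) % 2 = 0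
    · rw [if_pos h2]
      exact congrArg x (Fin.ext (by simp only [Fin.val_mk]; omega))
    · rw [if_neg h2]
      exact congrArg x (Fin.ext (by simp only [Fin.val_mk]; omega))
  · rw [dif_neg h]
    have hk := k.2
    exact congrArg x (Fin.ext (by simp only [Fin.val_mk]; omega))

lemma Dmap_Emap {d m : ℕ} (hd : d = 2 * m + 1) (y : (Fin m → F × F) × F) :
    Dmap hd (Emap hd y) = y := by
  unfold Dmap Emap
  refine Prod.ext ?_ ?_
  · funext j
    have h1 : 2 * j.1 < 2 * m := by have := j.2; omega
    have h2 : 2 * j.1 + 1 < 2 * m := by have := j.2; omega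
    refine Prod.ext ?_ ?_
    · simp only [dif_pos h1, if_pos (show 2 * j.1 % 2 = 0 by omega)]
      exact congrArg (fun jj => (y.1 jj).1) (Fin.ext (by simp only [Fin.val_mk]; omega))
    · simp only [dif_pos h2, if_neg (show ¬((2 * j.1 + 1) % 2 = 0) by omega)]
      exact congrArg (fun jj => (y.1 jj).2) (Fin.ext (by simp only [Fin.val_mk]; omega))
  · simp only [dif_neg (show ¬(2 * m < 2 * m) by omega)]

lemma Qi_eq {d m : ℕ} {F : Type*} [Field F] (hd : d = 2 * m + 1) (a : F) (i : ℕ)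
    (hi : i = 3 ∨ i = 4) (x : Fin d → F) :
    Qi a i x = Pform (Dmap hd x).1
      + (if i = 3 then (-1 : F) else -a) * ((Dmap hd x).2) ^ 2 := by
  have hp : pairsForm ((d - 1) / 2) x = Pform (Dmap hd x).1 := by
    have hm : (d - 1) / 2 = m := by omega
    rw [hm]
    unfold pairsForm Pform Dmap
    rw [← Fin.sum_univ_eq_sum_range]
    refine Finset.sum_congr rfl fun j _ => ?_
    rw [dif_pos (show 2 * j.1 + 1 < d by have := j.2; omega)]
  have hlast : x ⟨d - 1, by omega⟩ = (Dmap hd x).2 :=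
    congrArg x (Fin.ext (by simp only [Fin.val_mk]; omega))
  rcases hi with h | h <;> subst h
  · show Q3form x = _
    unfold Q3form
    rw [dif_pos (show 1 ≤ d by omega), hp, hlast, if_pos rfl]
    ring
  · show Q4form a x = _
    unfold Q4form
    rw [dif_pos (show 1 ≤ d by omega), hp, hlast,
      if_neg (show ¬((4:ℕ) = 3) by norm_num)]
    ring

end Bridge
/-- Intersection size of two `Q_i^d`-spheres (`i ∈ {3,4}`, odd `d`) whose
centers are at non-zero distance `t` with `D(t,r₁,r₂) ≠ 0`. -/
theorem stmt19 {F : Type*} [Field F] [Fintype F] [DecidableEq F]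
    (hq : Odd (Fintype.card F)) {d : ℕ} (hd : 3 ≤ d) (hdodd : Odd d)
    (i : ℕ) (hi : i = 3 ∨ i = 4) (a : F) (ha : ¬ IsSquare a)
    (c₁ c₂ : Fin d → F) (r₁ r₂ : F) (t : F)
    (htdef : t = Qi a i (c₁ - c₂)) (ht : t ≠ 0)
    (hD : t^2 + r₁^2 + r₂^2 - 2*(t*r₁ + t*r₂ + r₁*r₂) ≠ 0) :
    ((spherePts (Qi a i) (c₁, r₁) ∩ spherePts (Qi a i) (c₂, r₂)).card : ℤ)
      = (Fintype.card F : ℤ) ^ (d-2)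
        + (-1) ^ i * quadraticChar F (-t) * (Fintype.card F : ℤ) ^ ((d-3)/2) := by
  classical
  obtain ⟨m, hdm⟩ : ∃ m, d = 2 * m + 1 := by
    obtain ⟨k, hk⟩ := hdodd
    exact ⟨k, by omega⟩
  have hm : 1 ≤ m := by omega
  have hF2 : ringChar F ≠ 2 := by
    intro h
    have h2 := FiniteField.even_card_iff_char_two.mp h
    rw [Nat.odd_iff] at hq
    omega
  set b : F := if i = 3 then (-1 : F) else -a with hbdef
  have ha0 : a ≠ 0 := fun h0 => ha ⟨0, by rw [h0]; ring⟩
  have hbne : b ≠ 0 := by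
    rcases hi with h | h <;> subst h <;> simp [hbdef, ha0]
  have hQ : ∀ x : Fin d → F,
      Qi a i x = Pform (Dmap hdm x).1 + b * ((Dmap hdm x).2) ^ 2 := by
    intro x
    rw [Qi_eq hdm a i hi x, ← hbdef]
  set zc : Fin m → F × F := (Dmap hdm (c₁ - c₂)).1 with hzc
  set wc : F := (Dmap hdm (c₁ - c₂)).2 with hwc
  have ht' : Pform zc + b * wc ^ 2 = t := by rw [htdef, hQ]
  -- identify the two spheres' intersection with the clean-coordinates count
  have hcard : (spherePts (Qi a i) (c₁, r₁) ∩ spherePts (Qi a i) (c₂, r₂)).card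
      = (Finset.univ.filter fun y : (Fin m → F × F) × F =>
          Pform y.1 + b * y.2 ^ 2 = r₂ ∧ Pform (y.1 - zc) + b * (y.2 - wc) ^ 2 = r₁).card := by
    have key2 : ∀ x : Fin d → F,
        Pform ((Dmap hdm x).1 - zc) + b * ((Dmap hdm x).2 - wc) ^ 2
          = Qi a i (x - (c₁ - c₂)) := by
      intro x
      rw [hQ (x - (c₁ - c₂)), Dmap_sub, hzc, hwc, Prod.fst_sub, Prod.snd_sub]
    apply Finset.card_bij' (fun x _ => Dmap hdm (x - c₂)) (fun y _ => Emap hdm y + c₂)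
    · intro x _
      rw [Emap_Dmap]
      ring
    · intro y _
      have harg : Emap hdm y + c₂ - c₂ = Emap hdm y := by ring
      rw [harg, Dmap_Emap]
    · intro x hx
      rw [Finset.mem_inter] at hx
      obtain ⟨hx1, hx2⟩ := hx
      rw [spherePts, Finset.mem_filter] at hx1 hx2
      rw [Finset.mem_filter]
      refine ⟨Finset.mem_univ _, ?_, ?_⟩
      · rw [← hQ]
        exact hx2.2
      · rw [key2]
        have harg : x - c₂ - (c₁ - c₂) = x - c₁ := by ring
        rw [harg]
        exact hx1.2
    · intro y hy
      rw [Finset.mem_filter] at hy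
      obtain ⟨-, hy1, hy2⟩ := hy
      rw [Finset.mem_inter, spherePts, spherePts, Finset.mem_filter, Finset.mem_filter]
      refine ⟨⟨Finset.mem_univ _, ?_⟩, Finset.mem_univ _, ?_⟩
      · have harg : Emap hdm y + c₂ - c₁ = Emap hdm y - (c₁ - c₂) := by ring
        show Qi a i (Emap hdm y + c₂ - c₁) = r₁
        rw [harg, ← key2, Dmap_Emap]
        exact hy2
      · show Qi a i (Emap hdm y + c₂ - c₂) = r₂
        have harg : Emap hdm y + c₂ - c₂ = Emap hdm y := by ring
        rw [harg, hQ, Dmap_Emap]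
        exact hy1
  -- a primitive additive character into a characteristic-zero field
  have hchar : ringChar ℚ ≠ ringChar F := by
    rw [ringChar.eq_zero]
    exact (CharP.ringChar_ne_zero_of_finite F).symm
  set pc := AddChar.FiniteField.primitiveChar F ℚ hchar with hpc
  set R := CyclotomicField pc.n ℚ with hr
  have key := main_count (R := R) pc.prim hF2 hbne zc wc r₁ r₂ t ht' ht hD
  have hqch : ∀ x : F, qchar F R x = ((quadraticChar F x : ℤ) : R) := fun x => rfl
  rw [hqch] at key
  have keyZ : ((Finset.univ.filter fun y : (Fin m → F × F) × F =>
          Pform y.1 + b * y.2 ^ 2 = r₂ ∧ Pform (y.1 - zc) + b * (y.2 - wc) ^ 2 = r₁).card : ℤ)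
        * (Fintype.card F : ℤ) ^ 2
      = (Fintype.card F : ℤ) ^ (2 * m + 1)
        - (Fintype.card F : ℤ) ^ (m + 1) * quadraticChar F (b * t) := by
    have key' : ((((Finset.univ.filter fun y : (Fin m → F × F) × F =>
            Pform y.1 + b * y.2 ^ 2 = r₂ ∧ Pform (y.1 - zc) + b * (y.2 - wc) ^ 2 = r₁).card : ℤ)
          * (Fintype.card F : ℤ) ^ 2 : ℤ) : R)
        = (((Fintype.card F : ℤ) ^ (2 * m + 1)
          - (Fintype.card F : ℤ) ^ (m + 1) * quadraticChar F (b * t) : ℤ) : R) := by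
      rw [Int.cast_mul, Int.cast_sub, Int.cast_mul]
      push_cast
      exact key
    exact Int.cast_injective key'
  rw [hcard]
  have hq0 : (Fintype.card F : ℤ) ≠ 0 := Int.natCast_ne_zero.mpr Fintype.card_ne_zero
  obtain ⟨k, rfl⟩ : ∃ k, m = k + 1 := ⟨m - 1, by omega⟩
  have e1 : d - 2 = 2 * k + 1 := by omega
  have e2 : (d - 3) / 2 = k := by omega
  rw [e1, e2]
  have hbt : (quadraticChar F (b * t) : ℤ) = -((-1) ^ i * quadraticChar F (-t)) := by
    rcases hi with h | h <;> subst h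
    · have hb3 : b = -1 := by rw [hbdef]; norm_num
      rw [hb3, show ((-1 : F) * t) = -t by ring]
      norm_num
    · have hb4 : b = -a := by rw [hbdef]; norm_num
      rw [hb4, show ((-a : F) * t) = a * (-t) by ring, map_mul,
        quadraticChar_neg_one_iff_not_isSquare.mpr ha]
      norm_num
  apply mul_right_cancel₀ (pow_ne_zero 2 hq0)
  rw [keyZ, hbt]
  ring
end
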